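/- Let N ≥ 1 and d₁ ≤ d₂ ≤ … ≤ d_N ≤ d_{N+1} be positive integers. There exists a unit vector ψ in ℂ^{d₁} ⊗ … ⊗ ℂ^{d_N} ⊗ ℂ^{d_{N+1}} such that every one-body reduced density matrix of the pure state |ψ⟩⟨ψ| has non-degenerate (all distinct) eigenvalues, if and only if d_{N+1} ≤ (∏_{i=1}^N d_i) + 1. -/

import Mathlib

/-!
Write `ρ_j` for the reduced density matrices of `ψ`. Grouping all factors except the last one,
`ρ_last = M Mᴴ` for a `d_last × ∏_{i<N} d_i` matrix `M`, so its rank is at most `∏_{i<N} d_i`;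
simple spectrum allows at most one zero eigenvalue, hence `d_last ≤ ∏_{i<N} d_i + 1`.

Conversely, choose a set `S` of `min d_last (∏_{i<N} d_i)` basis configurations, any two of which
differ in at least two coordinates and which in every coordinate `j` miss at most one value.
For `ψ` supported on `S` the off-diagonal entries of every `ρ_j` vanish, and the diagonal entry at
`a` is the weight of the fibre `{x ∈ S | x j = a}`. Giving the points of `S` the weights `2 ^ k`
for distinct `k`, a fibre sum determines the fibre, so these diagonal entries are pairwise distinct.
-/

open Function Matrix

namespace Matrix.IsHermitian

variable {𝕜 n : Type*} [RCLike 𝕜] [Fintype n] [DecidableEq n]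

theorem injective_eigenvalues_of_diagonal {v : n → ℝ} (hv : Injective v)
    (h : (diagonal fun i => (v i : 𝕜)).IsHermitian) : Injective h.eigenvalues := by
  have hroots := h.roots_charpoly_eq_eigenvalues
  rw [charpoly_diagonal, Polynomial.roots_prod _ _ (by
    simp [Finset.prod_ne_zero_iff, Polynomial.X_sub_C_ne_zero])] at hroots
  simp only [Polynomial.roots_X_sub_C, Multiset.bind_singleton] at hroots
  have hnodup : (Finset.univ.val.map (RCLike.ofReal ∘ h.eigenvalues : n → 𝕜)).Nodup := by
    rw [← hroots]
    exact Finset.univ.nodup.map ((RCLike.ofReal_injective (K := 𝕜)).comp hv)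
  intro i j hij
  exact Multiset.inj_on_of_nodup_map hnodup i (Finset.mem_univ_val _) j (Finset.mem_univ_val _)
    (by simp [hij])

theorem card_le_rank_add_one {A : Matrix n n 𝕜} (h : A.IsHermitian)
    (hinj : Injective h.eigenvalues) : Fintype.card n ≤ A.rank + 1 := by
  have hzero : Fintype.card {i // h.eigenvalues i = 0} ≤ 1 :=
    Fintype.card_le_one_iff.mpr fun i j => Subtype.ext (hinj (i.2.trans j.2.symm))
  have hcompl : Fintype.card {i // h.eigenvalues i ≠ 0} =
      Fintype.card n - Fintype.card {i // h.eigenvalues i = 0} :=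
    Fintype.card_subtype_compl _
  rw [h.rank_eq_card_non_zero_eigs]
  omega

end Matrix.IsHermitian

section PiSplit

variable {ι : Type*} [DecidableEq ι] {β : ι → Type*}

theorem Equiv.update_piSplitAt_symm_apply (j : ι) (a b : β j) (y : ∀ i : {i // i ≠ j}, β i) :
    update ((Equiv.piSplitAt j β).symm (b, y)) j a = (Equiv.piSplitAt j β).symm (a, y) := by
  apply (Equiv.piSplitAt j β).injective
  ext i
  · simp
  · simp [i.2]

variable [Fintype ι] [∀ i, Fintype (β i)] {M : Type*} [AddCommMonoid M]

theorem Fintype.sum_comp_update (j : ι) (g : (β j → ∀ i, β i) → M) :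
    ∑ x : ∀ i, β i, g (update x j) =
      Fintype.card (β j) • ∑ y : ∀ i : {i // i ≠ j}, β i,
        g fun a => (Equiv.piSplitAt j β).symm (a, y) := by
  have hupd : ∀ b y, update ((Equiv.piSplitAt j β).symm (b, y)) j =
      fun a => (Equiv.piSplitAt j β).symm (a, y) :=
    fun b y => funext fun a => Equiv.update_piSplitAt_symm_apply j a b y
  rw [← (Equiv.piSplitAt j β).symm.sum_comp, Fintype.sum_prod_type, Finset.sum_comm]
  simp only [hupd, Finset.sum_const, Finset.card_univ, Finset.smul_sum]

theorem Fintype.sum_piSplitAt_symm (j : ι) (f : (∀ i, β i) → M) (a : β j) [DecidableEq (β j)] :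
    ∑ y : ∀ i : {i // i ≠ j}, β i, f ((Equiv.piSplitAt j β).symm (a, y)) =
      ∑ x with x j = a, f x := by
  rw [Finset.sum_filter, ← (Equiv.piSplitAt j β).symm.sum_comp, Fintype.sum_prod_type,
    Finset.sum_eq_single a]
  · simp
  · intro b _ hb
    simp [hb]
  · simp

end PiSplit

section ReducedDensity

variable {ι : Type*} [Fintype ι] [DecidableEq ι] {d : ι → ℕ}

/- `x j` is overwritten by `update`, so each term of the sum occurs `d j` times; the prefactor
`(d j)⁻¹` makes this the partial trace. -/
variable (d) in
noncomputable def reducedDensity (ψ : (∀ i, Fin (d i)) → ℂ) (j : ι) :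
    Matrix (Fin (d j)) (Fin (d j)) ℂ :=
  Matrix.of fun a b => ((d j : ℂ))⁻¹ *
    ∑ x : ∀ i, Fin (d i), ψ (update x j a) * star (ψ (update x j b))

theorem reducedDensity_eq_mul_conjTranspose (ψ : (∀ i, Fin (d i)) → ℂ) (j : ι) :
    reducedDensity d ψ j =
      (Matrix.of fun a y => ψ ((Equiv.piSplitAt j fun i => Fin (d i)).symm (a, y))) *
        (Matrix.of fun a y => ψ ((Equiv.piSplitAt j fun i => Fin (d i)).symm (a, y)))ᴴ := by
  ext a b
  have hd : (d j : ℂ) ≠ 0 := Nat.cast_ne_zero.mpr (Fin.pos a).ne'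
  rw [reducedDensity, of_apply, Fintype.sum_comp_update j fun u => ψ (u a) * star (ψ (u b)),
    Fintype.card_fin, nsmul_eq_mul, inv_mul_cancel_left₀ hd]
  simp [mul_apply]

theorem card_le_card_add_one_of_injective_eigenvalues (ψ : (∀ i, Fin (d i)) → ℂ) (j : ι)
    (h : (reducedDensity d ψ j).IsHermitian) (hinj : Injective h.eigenvalues) :
    d j ≤ Fintype.card (∀ i : {i // i ≠ j}, Fin (d i)) + 1 := by
  have hrank := h.card_le_rank_add_one hinj
  rw [Fintype.card_fin, reducedDensity_eq_mul_conjTranspose] at hrank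
  exact hrank.trans (Nat.add_le_add_right ((rank_mul_le_left _ _).trans (rank_le_card_width _)) 1)

theorem reducedDensity_eq_diagonal {ψ : (∀ i, Fin (d i)) → ℂ} {j : ι}
    (hψ : ∀ x y, ψ x ≠ 0 → ψ y ≠ 0 → (∀ i ≠ j, x i = y i) → x = y) :
    reducedDensity d ψ j = diagonal fun a => ((∑ x with x j = a, ‖ψ x‖ ^ 2 : ℝ) : ℂ) := by
  ext a b
  have hd : (d j : ℂ) ≠ 0 := Nat.cast_ne_zero.mpr (Fin.pos a).ne'
  rw [reducedDensity, of_apply, Fintype.sum_comp_update j fun u => ψ (u a) * star (ψ (u b)),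
    Fintype.card_fin, nsmul_eq_mul, inv_mul_cancel_left₀ hd]
  rcases eq_or_ne a b with rfl | hab
  · simp only [diagonal_apply_eq, ← Fintype.sum_piSplitAt_symm, Complex.ofReal_sum]
    refine Finset.sum_congr rfl fun y _ => ?_
    simp [Complex.mul_conj, Complex.normSq_eq_norm_sq]
  · rw [diagonal_apply_ne _ hab]
    refine Finset.sum_eq_zero fun y _ => ?_
    by_contra hne
    obtain ⟨ha, hb⟩ := mul_ne_zero_iff.mp hne
    refine hab ?_
    have := congrFun (hψ _ _ ha (star_ne_zero.mp hb) fun i hi => ?_) j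
    · simpa using this
    · simp [hi]

end ReducedDensity

theorem Finset.injective_sum_two_pow_fiber {α β : Type*} [DecidableEq β] (S : Finset α)
    {σ : α → ℕ} (hσ : Injective σ) (f : α → β) (hcover : {b | ∀ x ∈ S, f x ≠ b}.Subsingleton) :
    Injective fun b => ∑ x ∈ S with f x = b, 2 ^ σ x := by
  intro b c hbc
  have hfiber : {x ∈ S | f x = b} = {x ∈ S | f x = c} := by
    simp only [← Finset.sum_image fun x _ y _ h => hσ h] at hbc
    exact Finset.image_injective hσ (Finset.geomSum_injective le_rfl hbc)
  by_cases hb : ∃ x ∈ S, f x = b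
  · obtain ⟨x, hx, rfl⟩ := hb
    have : x ∈ {x ∈ S | f x = c} := hfiber ▸ Finset.mem_filter.mpr ⟨hx, rfl⟩
    exact (Finset.mem_filter.mp this).2
  · push Not at hb
    refine hcover hb fun x hx hxc => ?_
    have : x ∈ {x ∈ S | f x = b} := hfiber ▸ Finset.mem_filter.mpr ⟨hx, hxc⟩
    exact hb x hx (Finset.mem_filter.mp this).2

theorem exists_reducedDensity_injective_eigenvalues {ι : Type*} [Fintype ι] [DecidableEq ι]
    {d : ι → ℕ} (S : Finset (∀ i, Fin (d i))) (hS : S.Nonempty)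
    (hsep : ∀ j, ∀ x ∈ S, ∀ y ∈ S, (∀ i ≠ j, x i = y i) → x = y)
    (hcover : ∀ j, {a : Fin (d j) | ∀ x ∈ S, x j ≠ a}.Subsingleton) :
    ∃ ψ : (∀ i, Fin (d i)) → ℂ, ∑ x, ‖ψ x‖ ^ 2 = 1 ∧
      ∀ j, ∃ h : (reducedDensity d ψ j).IsHermitian, Injective h.eigenvalues := by
  set σ : (∀ i, Fin (d i)) → ℕ := fun x => Fintype.equivFin _ x
  have hσ : Injective σ := Fin.val_injective.comp (Fintype.equivFin _).injective
  set Z : ℝ := ∑ x ∈ S, 2 ^ σ x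
  have hZ : 0 < Z := Finset.sum_pos (fun _ _ => by positivity) hS
  set w : (∀ i, Fin (d i)) → ℝ := fun x => if x ∈ S then 2 ^ σ x / Z else 0
  set ψ : (∀ i, Fin (d i)) → ℂ := fun x => ((√(w x) : ℝ) : ℂ)
  have hψ : ∀ x, ‖ψ x‖ ^ 2 = w x := fun x => by
    rw [Complex.norm_real, Real.norm_eq_abs, sq_abs, Real.sq_sqrt]
    simp only [w]
    split_ifs <;> positivity
  have hsupp : ∀ x, ψ x ≠ 0 → x ∈ S := fun x hx => by
    by_contra hxS
    simp [ψ, w, hxS] at hx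
  refine ⟨ψ, ?_, fun j => ?_⟩
  · simp_rw [hψ, w, Finset.sum_ite_mem, Finset.univ_inter, ← Finset.sum_div]
    exact div_self hZ.ne'
  set q : Fin (d j) → ℝ := fun a => ((∑ x ∈ S with x j = a, 2 ^ σ x : ℕ) : ℝ) / Z
  have hq : ∀ a, ∑ x with x j = a, ‖ψ x‖ ^ 2 = q a := fun a => by
    simp_rw [q, hψ, w, Finset.sum_ite_mem, Nat.cast_sum, Nat.cast_pow, Nat.cast_ofNat,
      Finset.sum_div]
    congr 1
    ext x
    simp [and_comm]
  have hinj : Injective q := fun a b hab =>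
    Finset.injective_sum_two_pow_fiber S hσ (fun x => x j) (hcover j)
      (Nat.cast_injective ((div_left_inj' hZ.ne').mp hab))
  have hρ : reducedDensity d ψ j = diagonal fun a => (q a : ℂ) := by
    rw [reducedDensity_eq_diagonal fun x y hx hy => hsep j x (hsupp x hx) y (hsupp y hy)]
    simp only [hq]
  have hH : (diagonal fun a => (q a : ℂ)).IsHermitian :=
    isHermitian_diagonal_of_self_adjoint _ (by ext a; simp)
  rw [hρ]
  exact ⟨hH, hH.injective_eigenvalues_of_diagonal hinj⟩

theorem exists_injective_cover {ι : Type*} [Fintype ι] {d : ι → ℕ} (hpos : ∀ i, 0 < d i)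
    {m : ℕ} (hm : m ≤ ∏ i, d i) (hd : ∀ i, d i ≤ m + 1) :
    ∃ F : Fin m → ∀ i, Fin (d i), Injective F ∧
      ∀ i (a : Fin (d i)), (a : ℕ) + 1 < d i → ∃ k, F k i = a := by
  classical
  let stair : Fin m → ∀ i, Fin (d i) := fun k i => ⟨min k (d i - 1), by have := hpos i; omega⟩
  obtain ⟨B, hstair, -, hB⟩ := Finset.exists_subsuperset_card_eq (n := m)
    (Finset.subset_univ (Finset.univ.image stair)) (Finset.card_image_le.trans (by simp))
    (by simpa [Fintype.card_pi] using hm)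
  let e : B ≃ Fin m := Fintype.equivFinOfCardEq (by simpa using hB)
  refine ⟨fun k => (e.symm k).1, Subtype.val_injective.comp e.symm.injective, fun i a ha => ?_⟩
  have hmem : stair ⟨a, by have := hd i; omega⟩ ∈ B :=
    hstair (Finset.mem_image_of_mem _ (Finset.mem_univ _))
  refine ⟨e ⟨_, hmem⟩, ?_⟩
  ext
  simp only [Equiv.symm_apply_apply, stair]
  omega

theorem exists_separating_covering_finset {N : ℕ} {d : Fin (N + 1) → ℕ} (hpos : ∀ i, 0 < d i)
    (hmono : Monotone d) (hle : d (Fin.last N) ≤ ∏ i : Fin N, d i.castSucc + 1) :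
    ∃ S : Finset (∀ i, Fin (d i)), S.Nonempty ∧
      (∀ j, ∀ x ∈ S, ∀ y ∈ S, (∀ i ≠ j, x i = y i) → x = y) ∧
      ∀ j, {a : Fin (d j) | ∀ x ∈ S, x j ≠ a}.Subsingleton := by
  set D := d (Fin.last N)
  set P := ∏ i : Fin N, d i.castSucc
  have hP : 0 < P := Finset.prod_pos fun i _ => hpos _
  have hD : 0 < D := hpos _
  have hmD : min D P ≤ D := min_le_left _ _
  obtain ⟨F, hF, hFcover⟩ := exists_injective_cover (d := fun i : Fin N => d i.castSucc)
    (fun i => hpos _) (min_le_right D P) fun i => by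
      have h₁ : d i.castSucc ≤ D := hmono (Fin.le_last _)
      have h₂ : d i.castSucc ≤ P :=
        Finset.single_le_prod' (f := fun i : Fin N => d i.castSucc)
          (fun i _ => hpos (Fin.castSucc i)) (Finset.mem_univ i)
      omega
  let e : Fin (min D P) → ∀ i, Fin (d i) := fun k =>
    Fin.snoc (α := fun i => Fin (d i)) (F k) (Fin.castLE hmD k)
  refine ⟨Finset.univ.image e, Finset.univ_nonempty_iff.mpr ⟨⟨0, by omega⟩⟩ |>.image e, ?_, ?_⟩
  · simp only [Finset.mem_image, Finset.mem_univ, true_and, forall_exists_index,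
      forall_apply_eq_imp_iff]
    intro j k l hkl
    congr 1
    induction j using Fin.lastCases with
    | last =>
      refine hF (funext fun i => ?_)
      simpa [e] using hkl i.castSucc (Fin.castSucc_lt_last i).ne
    | cast j =>
      refine Fin.castLE_injective hmD ?_
      simpa [e] using hkl (Fin.last N) (Fin.castSucc_lt_last j).ne'
  · intro j
    induction j using Fin.lastCases with
    | last =>
      suffices h : ∀ c : Fin D, (∀ x ∈ Finset.univ.image e, x (Fin.last N) ≠ c) →
          (c : ℕ) = min D P from
        fun a ha b hb => Fin.ext ((h a ha).trans (h b hb).symm)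
      intro c hc
      by_contra hne
      exact hc (e ⟨c, by omega⟩) (Finset.mem_image_of_mem _ (Finset.mem_univ _))
        (by ext; simp [e])
    | cast j =>
      suffices h : ∀ c : Fin (d j.castSucc), (∀ x ∈ Finset.univ.image e, x j.castSucc ≠ c) →
          (c : ℕ) + 1 = d j.castSucc from
        fun a ha b hb => Fin.ext (by have := h a ha; have := h b hb; omega)
      intro c hc
      by_contra hne
      obtain ⟨k, hk⟩ := hFcover j c (by omega)
      exact hc (e k) (Finset.mem_image_of_mem _ (Finset.mem_univ _)) (by simp [e, hk])

theorem stmt_0_general (N : ℕ) (d : Fin (N + 1) → ℕ)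
    (hpos : ∀ i, 0 < d i) (hmono : Monotone d) :
    (∃ ψ : (∀ i, Fin (d i)) → ℂ,
      (∑ x : ∀ i, Fin (d i), ‖ψ x‖ ^ 2) = 1 ∧
      ∀ j : Fin (N + 1),
        ∃ h : Matrix.IsHermitian
          (Matrix.of fun a b : Fin (d j) =>
            ((d j : ℂ))⁻¹ *
              ∑ x : ∀ i, Fin (d i),
                ψ (Function.update x j a) * star (ψ (Function.update x j b))),
          Function.Injective h.eigenvalues)
    ↔ d (Fin.last N) ≤ (∏ i : Fin N, d (Fin.castSucc i)) + 1 := by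
  constructor
  · rintro ⟨ψ, -, hψ⟩
    obtain ⟨h, hinj⟩ := hψ (Fin.last N)
    have hcard := card_le_card_add_one_of_injective_eigenvalues ψ (Fin.last N) h hinj
    rw [Fintype.card_pi, ← (finSuccAboveEquiv (Fin.last N)).prod_comp] at hcard
    simpa [finSuccAboveEquiv_apply] using hcard
  · intro hle
    obtain ⟨S, hS, hsep, hcover⟩ := exists_separating_covering_finset hpos hmono hle
    exact exists_reducedDensity_injective_eigenvalues S hS hsep hcover

/-- there exists a pure state of `N+1` distinguishable particles with local
dimensions `d 0 ≤ … ≤ d N` whose one-body reduced density matrices all have non-degenerate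
(all distinct) eigenvalues, iff `d (last) ≤ (∏ first N dims) + 1`. The `j`-th reduced density
matrix is `ρ_j a b = (d j)⁻¹ ∑_x ψ(x[j ↦ a]) conj ψ(x[j ↦ b])` (partial trace). -/
theorem stmt_0 (N : ℕ) (hN : 1 ≤ N) (d : Fin (N + 1) → ℕ)
    (hpos : ∀ i, 0 < d i) (hmono : Monotone d) :
    (∃ ψ : (∀ i, Fin (d i)) → ℂ,
      (∑ x : ∀ i, Fin (d i), ‖ψ x‖ ^ 2) = 1 ∧
      ∀ j : Fin (N + 1),
        ∃ h : Matrix.IsHermitian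
          (Matrix.of fun a b : Fin (d j) =>
            ((d j : ℂ))⁻¹ *
              ∑ x : ∀ i, Fin (d i),
                ψ (Function.update x j a) * star (ψ (Function.update x j b))),
          Function.Injective h.eigenvalues)
    ↔ d (Fin.last N) ≤ (∏ i : Fin N, d (Fin.castSucc i)) + 1 :=
  stmt_0_general N d hpos hmono
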